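/- arXiv:2003.13808 — 4 statements merged into one kernel-verified Lean document; each statement's English description precedes it below -/
import Mathlib

section
/- Let p00, p01, p10, p11 be nonnegative reals with p00+p01 > 0 and p10+p11 > 0, and let α0, α1 ≥ 0 with α := α0+α1 > 0, α0 ≤ p00, α1 ≤ p01 and α < p00+p01. Define FPR = p01/(p00+p01), FNR = p10/(p10+p11), FPR* = (p01-α1)/(p00+p01-α), FNR* = (p10+α0)/(p10+p11+α). If 1-FPR < FNR, then it is not the case that both FNR ≤ FNR* and FPR ≥ FPR* hold. -/
theorem stmt_0 (p00 p01 p10 p11 α0 α1 : ℝ)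
    (h00 : 0 ≤ p00) (h01 : 0 ≤ p01) (h10 : 0 ≤ p10) (h11 : 0 ≤ p11)
    (hobs0 : 0 < p00 + p01) (hobs1 : 0 < p10 + p11)
    (ha0 : 0 ≤ α0) (ha1 : 0 ≤ α1) (hapos : 0 < α0 + α1)
    (ha0le : α0 ≤ p00) (ha1le : α1 ≤ p01) (halt : α0 + α1 < p00 + p01)
    (FPR FNR FPRstar FNRstar : ℝ)
    (hFPR : FPR = p01 / (p00 + p01))
    (hFNR : FNR = p10 / (p10 + p11))
    (hFPRstar : FPRstar = (p01 - α1) / (p00 + p01 - (α0 + α1)))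
    (hFNRstar : FNRstar = (p10 + α0) / (p10 + p11 + (α0 + α1)))
    (hcase : 1 - FPR < FNR) :
    ¬ (FNR ≤ FNRstar ∧ FPRstar ≤ FPR) := by
  rintro ⟨h1, h2⟩
  subst hFPR hFNR hFPRstar hFNRstar
  have hd1 : 0 < p10 + p11 + (α0 + α1) := by linarith
  have hd2 : 0 < p00 + p01 - (α0 + α1) := by linarith
  rw [div_le_div_iff₀ hobs1 hd1] at h1
  rw [div_le_div_iff₀ hd2 hobs0] at h2
  rw [sub_lt_iff_lt_add, div_add_div _ _ (ne_of_gt hobs1) (ne_of_gt hobs0),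
    lt_div_iff₀ (by positivity)] at hcase
  -- h1: α0 * (p10+p11) ≥ p10 * (α0+α1); h2: α1 * (p00+p01) ≥ p01 * (α0+α1)
  nlinarith [mul_pos hapos (mul_pos hobs1 hobs0), mul_nonneg ha0 h01, mul_nonneg ha1 h10,
    mul_nonneg (mul_nonneg ha0 h01) h11, mul_nonneg (mul_nonneg ha1 h10) h00,
    mul_le_mul_of_nonneg_right h1 (le_of_lt hobs0),
    mul_le_mul_of_nonneg_right h2 (le_of_lt hobs1)]
end

section
/- Let p00, p01, p10, p11 be nonnegative reals with p00+p01 > 0 and p10+p11 > 0, and let α0, α1 ≥ 0 with α := α0+α1 > 0, α0 ≤ p00, α1 ≤ p01 and α < p00+p01. With FPR, FNR, FPR*, FNR* defined as FPR = p01/(p00+p01), FNR = p10/(p10+p11), FPR* = (p01-α1)/(p00+p01-α), FNR* = (p10+α0)/(p10+p11+α): if 1-FPR > FNR, then it is not the case that both FNR ≥ FNR* and FPR ≤ FPR* hold. -/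
theorem stmt_1 (p00 p01 p10 p11 α0 α1 : ℝ)
    (h00 : 0 ≤ p00) (h01 : 0 ≤ p01) (h10 : 0 ≤ p10) (h11 : 0 ≤ p11)
    (hobs0 : 0 < p00 + p01) (hobs1 : 0 < p10 + p11)
    (ha0 : 0 ≤ α0) (ha1 : 0 ≤ α1) (hapos : 0 < α0 + α1)
    (ha0le : α0 ≤ p00) (ha1le : α1 ≤ p01) (halt : α0 + α1 < p00 + p01)
    (FPR FNR FPRstar FNRstar : ℝ)
    (hFPR : FPR = p01 / (p00 + p01))
    (hFNR : FNR = p10 / (p10 + p11))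
    (hFPRstar : FPRstar = (p01 - α1) / (p00 + p01 - (α0 + α1)))
    (hFNRstar : FNRstar = (p10 + α0) / (p10 + p11 + (α0 + α1)))
    (hcase : FNR < 1 - FPR) :
    ¬ (FNRstar ≤ FNR ∧ FPR ≤ FPRstar) := by
  rintro ⟨h1, h2⟩
  subst hFPR hFNR hFPRstar hFNRstar
  have hd1 : (0:ℝ) < p10 + p11 + (α0 + α1) := by linarith
  have hd2 : (0:ℝ) < p00 + p01 - (α0 + α1) := by linarith
  rw [div_le_div_iff₀ hd1 hobs1] at h1
  rw [div_le_div_iff₀ hobs0 hd2] at h2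
  rw [div_lt_iff₀ hobs1, sub_mul, one_mul, div_mul_eq_mul_div] at hcase
  have hc : p01 * (p10 + p11) < p11 * (p00 + p01) := by
    rw [← div_lt_iff₀ hobs0]; linarith
  nlinarith [mul_pos hobs0 hobs1, mul_nonneg ha0 h01, mul_nonneg ha1 h10,
    mul_nonneg ha0 ha1]
end

section
/- Let Ω be a finite probability space with random variables Y, Y*, Ŷ taking values in {0,1}. Assume one-sided noise: P(Y=1, Y*=0) = 0, and assume Ŷ is conditionally independent of Y given Y* (label-dependent noise), with P(Y=1) > 0 and P(Y*=1) > 0. Then P(Ŷ=0 | Y*=1) = P(Ŷ=0 | Y=1); i.e., the true false negative rate equals the observed false negative rate. -/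
open Classical

/-- Probability of an event under a weight function on a finite type. -/
noncomputable def Pr {Ω : Type*} [Fintype Ω] (p : Ω → ℝ) (E : Ω → Prop) : ℝ :=
  ∑ ω, if E ω then p ω else 0

theorem stmt_12 {Ω : Type*} [Fintype Ω] (p : Ω → ℝ)
    (hp : ∀ ω, 0 ≤ p ω) (hp1 : ∑ ω, p ω = 1)
    (Y Ystar Yhat : Ω → ℕ)
    (hbinY : ∀ ω, Y ω = 0 ∨ Y ω = 1)
    (hbinYs : ∀ ω, Ystar ω = 0 ∨ Ystar ω = 1)
    (hbinYh : ∀ ω, Yhat ω = 0 ∨ Yhat ω = 1)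
    -- one-sided noise: no false positives in the observed label
    (honesided : Pr p (fun ω => Y ω = 1 ∧ Ystar ω = 0) = 0)
    -- Ŷ ⊥ Y ∣ Y*
    (hCI : ∀ a b c : ℕ,
      Pr p (fun ω => Yhat ω = a ∧ Y ω = b ∧ Ystar ω = c) * Pr p (fun ω => Ystar ω = c)
        = Pr p (fun ω => Yhat ω = a ∧ Ystar ω = c) * Pr p (fun ω => Y ω = b ∧ Ystar ω = c))
    (hY1 : 0 < Pr p (fun ω => Y ω = 1))
    (hYs1 : 0 < Pr p (fun ω => Ystar ω = 1)) :
    Pr p (fun ω => Yhat ω = 0 ∧ Ystar ω = 1) / Pr p (fun ω => Ystar ω = 1)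
      = Pr p (fun ω => Yhat ω = 0 ∧ Y ω = 1) / Pr p (fun ω => Y ω = 1) := by
  have hz : ∀ ω, Y ω = 1 ∧ Ystar ω = 0 → p ω = 0 := by
    intro ω hω
    have h := (Finset.sum_eq_zero_iff_of_nonneg (fun ω _ => by
      by_cases h : Y ω = 1 ∧ Ystar ω = 0 <;> simp [h, hp ω])).mp honesided ω (Finset.mem_univ ω)
    simpa [hω] using h
  have h1 : Pr p (fun ω => Y ω = 1 ∧ Ystar ω = 1) = Pr p (fun ω => Y ω = 1) := by
    unfold Pr
    refine Finset.sum_congr rfl fun ω _ => ?_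
    rcases hbinYs ω with h | h
    · by_cases hy : Y ω = 1
      · simp [h, hy, hz ω ⟨hy, h⟩]
      · simp [hy]
    · simp [h]
  have h2 : Pr p (fun ω => Yhat ω = 0 ∧ Y ω = 1) =
      Pr p (fun ω => Yhat ω = 0 ∧ Y ω = 1 ∧ Ystar ω = 1) := by
    unfold Pr
    refine Finset.sum_congr rfl fun ω _ => ?_
    rcases hbinYs ω with h | h
    · by_cases hy : Y ω = 1
      · simp [h, hy, hz ω ⟨hy, h⟩]
      · simp [hy]
    · simp [h]
  have hci := hCI 0 1 1
  have hC : 0 < Pr p (fun ω => Y ω = 1 ∧ Ystar ω = 1) := h1 ▸ hY1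
  rw [h2, ← h1]
  field_simp
  linarith [hci]
end

section
/- Let Ω be a finite probability space with binary random variables Y, Y*, Ŷ. Assume P(Y=1, Y*=0) = 0, Y is conditionally independent of Ŷ given Y*, P(Ŷ=1) > 0, P(Y*=1) > 0, and let γ = P(Y=0 | Y*=1) with γ < 1. Then P(Y*=1 | Ŷ=1) = P(Y=1 | Ŷ=1)/(1-γ); i.e., the true positive predictive value equals the observed positive predictive value divided by (1-γ). -/
open Classical

lemma Pr_nonneg {Ω : Type*} [Fintype Ω] (p : Ω → ℝ) (hp : ∀ ω, 0 ≤ p ω) (E : Ω → Prop) :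
    0 ≤ Pr p E := by
  apply Finset.sum_nonneg; intro ω _; by_cases h : E ω <;> simp [h, hp ω]

lemma Pr_mono {Ω : Type*} [Fintype Ω] (p : Ω → ℝ) (hp : ∀ ω, 0 ≤ p ω) {E F : Ω → Prop}
    (h : ∀ ω, E ω → F ω) : Pr p E ≤ Pr p F := by
  apply Finset.sum_le_sum; intro ω _
  by_cases hE : E ω
  · simp [hE, h ω hE]
  · by_cases hF : F ω <;> simp [hE, hF, hp ω]

lemma Pr_congr {Ω : Type*} [Fintype Ω] (p : Ω → ℝ) {E F : Ω → Prop}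
    (h : ∀ ω, E ω ↔ F ω) : Pr p E = Pr p F := by
  unfold Pr; apply Finset.sum_congr rfl; intro ω _; simp [h ω]

lemma Pr_split {Ω : Type*} [Fintype Ω] (p : Ω → ℝ) (E : Ω → Prop) (f : Ω → ℕ)
    (hb : ∀ ω, f ω = 0 ∨ f ω = 1) :
    Pr p E = Pr p (fun ω => E ω ∧ f ω = 1) + Pr p (fun ω => E ω ∧ f ω = 0) := by
  unfold Pr
  rw [← Finset.sum_add_distrib]
  apply Finset.sum_congr rfl; intro ω _
  rcases hb ω with h | h <;> by_cases hE : E ω <;> simp [h, hE]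

theorem stmt_13 {Ω : Type*} [Fintype Ω] (p : Ω → ℝ)
    (hp : ∀ ω, 0 ≤ p ω) (hp1 : ∑ ω, p ω = 1)
    (Y Ystar Yhat : Ω → ℕ)
    (hbinY : ∀ ω, Y ω = 0 ∨ Y ω = 1)
    (hbinYs : ∀ ω, Ystar ω = 0 ∨ Ystar ω = 1)
    (hbinYh : ∀ ω, Yhat ω = 0 ∨ Yhat ω = 1)
    -- one-sided noise: no false positives in the observed label
    (honesided : Pr p (fun ω => Y ω = 1 ∧ Ystar ω = 0) = 0)
    -- Y ⊥ Ŷ ∣ Y*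
    (hCI : ∀ a b c : ℕ,
      Pr p (fun ω => Y ω = b ∧ Yhat ω = a ∧ Ystar ω = c) * Pr p (fun ω => Ystar ω = c)
        = Pr p (fun ω => Y ω = b ∧ Ystar ω = c) * Pr p (fun ω => Yhat ω = a ∧ Ystar ω = c))
    (hYh1 : 0 < Pr p (fun ω => Yhat ω = 1))
    (hYs1 : 0 < Pr p (fun ω => Ystar ω = 1))
    (γ : ℝ)
    (hγ : γ = Pr p (fun ω => Y ω = 0 ∧ Ystar ω = 1) / Pr p (fun ω => Ystar ω = 1))
    (hγ1 : γ < 1) :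
    Pr p (fun ω => Ystar ω = 1 ∧ Yhat ω = 1) / Pr p (fun ω => Yhat ω = 1)
      = (Pr p (fun ω => Y ω = 1 ∧ Yhat ω = 1) / Pr p (fun ω => Yhat ω = 1)) / (1 - γ) := by
  set S := Pr p (fun ω => Ystar ω = 1) with hS
  -- P(Y=1 ∧ Ŷ=1 ∧ Y*=0) = 0
  have h0 : Pr p (fun ω => Y ω = 1 ∧ Yhat ω = 1 ∧ Ystar ω = 0) = 0 := by
    have hle := Pr_mono p hp (E := fun ω => Y ω = 1 ∧ Yhat ω = 1 ∧ Ystar ω = 0)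
      (F := fun ω => Y ω = 1 ∧ Ystar ω = 0) (fun ω h => ⟨h.1, h.2.2⟩)
    have hge := Pr_nonneg p hp (fun ω => Y ω = 1 ∧ Yhat ω = 1 ∧ Ystar ω = 0)
    linarith [honesided ▸ hle]
  -- P(Y=1 ∧ Ŷ=1) = P(Y=1 ∧ Ŷ=1 ∧ Y*=1)
  have hsplit : Pr p (fun ω => Y ω = 1 ∧ Yhat ω = 1)
      = Pr p (fun ω => Y ω = 1 ∧ Yhat ω = 1 ∧ Ystar ω = 1) := by
    rw [Pr_split p (fun ω => Y ω = 1 ∧ Yhat ω = 1) Ystar hbinYs]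
    rw [Pr_congr p (F := fun ω => Y ω = 1 ∧ Yhat ω = 1 ∧ Ystar ω = 1) (by tauto),
        Pr_congr p (E := fun ω => (Y ω = 1 ∧ Yhat ω = 1) ∧ Ystar ω = 0)
          (F := fun ω => Y ω = 1 ∧ Yhat ω = 1 ∧ Ystar ω = 0) (by tauto), h0]
    ring
  -- P(Y=1 ∧ Y*=1) = (1-γ) S
  have hsplitS : S = Pr p (fun ω => Y ω = 1 ∧ Ystar ω = 1)
      + Pr p (fun ω => Y ω = 0 ∧ Ystar ω = 1) := by
    rw [hS, Pr_split p (fun ω => Ystar ω = 1) Y hbinY]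
    rw [Pr_congr p (E := fun ω => Ystar ω = 1 ∧ Y ω = 1)
          (F := fun ω => Y ω = 1 ∧ Ystar ω = 1) (by tauto),
        Pr_congr p (E := fun ω => Ystar ω = 1 ∧ Y ω = 0)
          (F := fun ω => Y ω = 0 ∧ Ystar ω = 1) (by tauto)]
  have hY1S : Pr p (fun ω => Y ω = 1 ∧ Ystar ω = 1) = (1 - γ) * S := by
    have : Pr p (fun ω => Y ω = 0 ∧ Ystar ω = 1) = γ * S := by
      rw [hγ, div_mul_cancel₀ _ (ne_of_gt hYs1)]
    linarith [hsplitS, this]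
  have hCI1 := hCI 1 1 1
  -- P(Ŷ=1 ∧ Y*=1) in terms of A
  have hkey : Pr p (fun ω => Y ω = 1 ∧ Yhat ω = 1 ∧ Ystar ω = 1)
      = (1 - γ) * Pr p (fun ω => Yhat ω = 1 ∧ Ystar ω = 1) := by
    have hSne : S ≠ 0 := ne_of_gt hYs1
    have := hCI1
    rw [hY1S] at this
    apply mul_right_cancel₀ hSne
    rw [this]; ring
  have hcomm : Pr p (fun ω => Ystar ω = 1 ∧ Yhat ω = 1)
      = Pr p (fun ω => Yhat ω = 1 ∧ Ystar ω = 1) := Pr_congr p (by tauto)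
  rw [hcomm, hsplit, hkey]
  have h1γ : (1 : ℝ) - γ ≠ 0 := by linarith
  field_simp
end
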